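/- If G is a nonempty bipartite graph, then ⌈s(G)/2⌉ ≤ d(G) ≤ s(G). -/

import Mathlib

/-!
Fix a proper 2-colouring of `G` and flip the sign of every label on one colour class. On an edge
`uv` this exchanges `f u + f v` and `±(f u - f v)`. Hence, after translating a labeling so that it
is nonnegative (which keeps the flipped labeling injective, shifts every edge sum by the same
constant and leaves edge differences unchanged), an optimal sum labeling yields a difference
labeling with as many edge values, so `d(G) ≤ s(G)`; and an optimal difference labeling yields a
sum labeling whose edge values lie in `D ∪ -D` for the set `D` of edge differences, so
`s(G) ≤ 2 d(G)`.
-/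

open SimpleGraph Function

def edgePlus {V : Type*} (f : V → ℤ) : Sym2 V → ℤ :=
  Sym2.lift ⟨fun u v => f u + f v, fun u v => by ring⟩

def edgeMinus {V : Type*} (f : V → ℤ) : Sym2 V → ℤ :=
  Sym2.lift ⟨fun u v => |f u - f v|, fun u v => abs_sub_comm _ _⟩

/-- The sum index: the minimum, over injective vertex labelings `f : V → ℤ`,
of the number of distinct values of `f⁺(uv) = f u + f v` on the edges. -/
noncomputable def sumIndex {V : Type*} (G : SimpleGraph V) : ℕ :=
  sInf {k | ∃ f : V → ℤ, Function.Injective f ∧ (edgePlus f '' G.edgeSet).ncard = k}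

/-- The difference index: the minimum, over injective vertex labelings `f : V → ℤ`,
of the number of distinct values of `f⁻(uv) = |f u − f v|` on the edges. -/
noncomputable def diffIndex {V : Type*} (G : SimpleGraph V) : ℕ :=
  sInf {k | ∃ f : V → ℤ, Function.Injective f ∧ (edgeMinus f '' G.edgeSet).ncard = k}

section Labeling

variable {V : Type*}

@[simp]
lemma edgePlus_mk (f : V → ℤ) (u v : V) : edgePlus f s(u, v) = f u + f v := rfl

@[simp]
lemma edgeMinus_mk (f : V → ℤ) (u v : V) : edgeMinus f s(u, v) = |f u - f v| := rfl

lemma edgePlus_add_const (f : V → ℤ) (N : ℤ) (e : Sym2 V) :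
    edgePlus (fun v => f v + N) e = edgePlus f e + 2 * N := by
  induction e using Sym2.ind with
  | _ u v => simp only [edgePlus_mk]; ring

lemma edgeMinus_add_const (f : V → ℤ) (N : ℤ) (e : Sym2 V) :
    edgeMinus (fun v => f v + N) e = edgeMinus f e := by
  induction e using Sym2.ind with
  | _ u v => simp

lemma exists_add_const_nonneg [Finite V] (f : V → ℤ) : ∃ N : ℤ, ∀ v, 0 ≤ f v + N := by
  obtain ⟨M, hM⟩ := (Set.finite_range f).bddBelow
  exact ⟨-M, fun v => by linarith [hM (Set.mem_range_self v)]⟩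

lemma exists_injective_int [Countable V] : ∃ f : V → ℤ, Injective f := by
  obtain ⟨f, hf⟩ := Countable.exists_injective_nat V
  exact ⟨fun v => f v, Nat.cast_injective.comp hf⟩

end Labeling

section Index

variable {V : Type*} (G : SimpleGraph V)

lemma sumIndex_le {f : V → ℤ} (hf : Injective f) :
    sumIndex G ≤ (edgePlus f '' G.edgeSet).ncard :=
  Nat.sInf_le ⟨f, hf, rfl⟩

lemma diffIndex_le {f : V → ℤ} (hf : Injective f) :
    diffIndex G ≤ (edgeMinus f '' G.edgeSet).ncard :=
  Nat.sInf_le ⟨f, hf, rfl⟩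

lemma exists_ncard_eq_sumIndex [Countable V] :
    ∃ f : V → ℤ, Injective f ∧ (edgePlus f '' G.edgeSet).ncard = sumIndex G :=
  let ⟨f, hf⟩ := exists_injective_int (V := V)
  Nat.sInf_mem (s := {k | ∃ f : V → ℤ, Injective f ∧ (edgePlus f '' G.edgeSet).ncard = k})
    ⟨_, f, hf, rfl⟩

lemma exists_ncard_eq_diffIndex [Countable V] :
    ∃ f : V → ℤ, Injective f ∧ (edgeMinus f '' G.edgeSet).ncard = diffIndex G :=
  let ⟨f, hf⟩ := exists_injective_int (V := V)
  Nat.sInf_mem (s := {k | ∃ f : V → ℤ, Injective f ∧ (edgeMinus f '' G.edgeSet).ncard = k})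
    ⟨_, f, hf, rfl⟩

end Index

section SignFlip

variable {V : Type*} (c : V → Fin 2) (f : V → ℤ)

def signFlip : V → ℤ := fun v => if c v = 0 then f v else -f v

variable {c f}

lemma signFlip_injective (hf : Injective f) (hf₀ : ∀ v, 0 ≤ f v) :
    Injective (signFlip c f) := by
  intro a b h
  have ha := hf₀ a
  have hb := hf₀ b
  by_cases hca : c a = 0 <;> by_cases hcb : c b = 0 <;>
    simp only [signFlip, hca, hcb, if_true, if_false, neg_inj] at h
  all_goals first | exact hf h | exact hf (by linarith)

lemma abs_signFlip_add {u v : V} (huv : c u ≠ c v) :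
    |signFlip c f u + signFlip c f v| = |f u - f v| := by
  by_cases hcu : c u = 0
  · have hcv : c v ≠ 0 := hcu ▸ huv.symm
    simp only [signFlip, hcu, hcv, if_true, if_false, ← sub_eq_add_neg]
  · have hcv : c v = 0 := by omega
    simp only [signFlip, hcu, hcv, if_true, if_false]
    rw [neg_add_eq_sub, abs_sub_comm]

lemma abs_signFlip_sub {u v : V} (huv : c u ≠ c v) (hu : 0 ≤ f u) (hv : 0 ≤ f v) :
    |signFlip c f u - signFlip c f v| = f u + f v := by
  by_cases hcu : c u = 0
  · have hcv : c v ≠ 0 := hcu ▸ huv.symm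
    simp only [signFlip, hcu, hcv, if_true, if_false, sub_neg_eq_add]
    exact abs_of_nonneg (by linarith)
  · have hcv : c v = 0 := by omega
    simp only [signFlip, hcu, hcv, if_true, if_false]
    rw [abs_of_nonpos (by linarith)]
    ring

variable {G : SimpleGraph V}

lemma edgeMinus_signFlip (C : G.Coloring (Fin 2)) (hf₀ : ∀ v, 0 ≤ f v) {e : Sym2 V}
    (he : e ∈ G.edgeSet) : edgeMinus (signFlip C f) e = edgePlus f e := by
  induction e using Sym2.ind with
  | _ u v => exact abs_signFlip_sub (C.valid he) (hf₀ u) (hf₀ v)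

lemma abs_edgePlus_signFlip (C : G.Coloring (Fin 2)) {e : Sym2 V} (he : e ∈ G.edgeSet) :
    |edgePlus (signFlip C f) e| = edgeMinus f e := by
  induction e using Sym2.ind with
  | _ u v => exact abs_signFlip_add (C.valid he)

end SignFlip

open Pointwise in
lemma ncard_le_two_mul_of_abs_mem {S D : Set ℤ} (hD : D.Finite) (h : ∀ x ∈ S, |x| ∈ D) :
    S.ncard ≤ 2 * D.ncard := by
  have hS : S ⊆ D ∪ -D := fun x hx => by
    rcases abs_choice x with hx' | hx'
    · exact Or.inl (hx' ▸ h x hx)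
    · exact Or.inr (Set.mem_neg.2 (hx' ▸ h x hx))
  calc S.ncard ≤ (D ∪ -D).ncard := Set.ncard_le_ncard hS (hD.union hD.neg)
    _ ≤ D.ncard + (-D).ncard := Set.ncard_union_le _ _
    _ = 2 * D.ncard := by rw [Set.ncard_neg, two_mul]

section Bipartite

variable {V : Type*} [Finite V] {G : SimpleGraph V}

theorem diffIndex_le_sumIndex (C : G.Coloring (Fin 2)) : diffIndex G ≤ sumIndex G := by
  obtain ⟨f, hf, hcard⟩ := exists_ncard_eq_sumIndex G
  obtain ⟨N, hN⟩ := exists_add_const_nonneg f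
  have hf' : Injective fun v => f v + N := (add_left_injective N).comp hf
  have him : edgeMinus (signFlip C fun v => f v + N) '' G.edgeSet =
      (· + 2 * N) '' (edgePlus f '' G.edgeSet) := by
    rw [← Set.image_comp]
    refine Set.image_congr fun e he => ?_
    rw [edgeMinus_signFlip C hN he, edgePlus_add_const, comp_apply]
  calc diffIndex G ≤ (edgeMinus (signFlip C fun v => f v + N) '' G.edgeSet).ncard :=
        diffIndex_le G (signFlip_injective hf' hN)
    _ = sumIndex G := by
        rw [him, Set.ncard_image_of_injective _ (add_left_injective _), hcard]

theorem sumIndex_le_two_mul_diffIndex (C : G.Coloring (Fin 2)) :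
    sumIndex G ≤ 2 * diffIndex G := by
  obtain ⟨g, hg, hcard⟩ := exists_ncard_eq_diffIndex G
  obtain ⟨N, hN⟩ := exists_add_const_nonneg g
  have hg' : Injective fun v => g v + N := (add_left_injective N).comp hg
  calc sumIndex G ≤ (edgePlus (signFlip C fun v => g v + N) '' G.edgeSet).ncard :=
        sumIndex_le G (signFlip_injective hg' hN)
    _ ≤ 2 * (edgeMinus g '' G.edgeSet).ncard := by
        refine ncard_le_two_mul_of_abs_mem (Set.toFinite _) ?_
        rintro _ ⟨e, he, rfl⟩
        exact ⟨e, he, by rw [abs_edgePlus_signFlip C he, edgeMinus_add_const]⟩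
    _ = 2 * diffIndex G := by rw [hcard]

end Bipartite

theorem stmt15_general {V : Type*} [Fintype V] (G : SimpleGraph V)
    (hbip : G.Colorable 2) :
    (sumIndex G + 1) / 2 ≤ diffIndex G ∧ diffIndex G ≤ sumIndex G := by
  obtain ⟨C⟩ := hbip
  have := sumIndex_le_two_mul_diffIndex C
  exact ⟨by omega, diffIndex_le_sumIndex C⟩

theorem stmt15 {V : Type*} [Fintype V] (G : SimpleGraph V)
    (hG : G.edgeSet.Nonempty) (hbip : G.Colorable 2) :
    (sumIndex G + 1) / 2 ≤ diffIndex G ∧ diffIndex G ≤ sumIndex G :=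
  stmt15_general G hbip
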